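/- arXiv:1404.3552 — 2 statements merged into one kernel-verified Lean document; each statement's English description precedes it below -/
import Mathlib

section
/- For a C² curve τ: ℝ → ℂ with τ'(s) ≠ 0, the limit as σ → s of Im(τ'(σ)/(τ(σ) - τ(s))) equals Im(τ''(s)/(2τ'(s))). -/
/-!
Write `h = σ - s`. For `h ≠ 0` and `τ σ ≠ τ s`,
`τ'(σ)/(τ(σ) - τ(s)) - 1/h = ((τ'(σ) - τ'(s))/h - (τ(σ) - τ(s) - h τ'(s))/h²) / ((τ(σ) - τ(s))/h)`.
The three quotients tend to `τ''(s)`, `τ''(s)/2` (second-order Taylor expansion) and `τ'(s) ≠ 0`,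
so the left side tends to `τ''(s)/(2τ'(s))`; and `1/h` is real, so it does not affect the
imaginary part.
-/

open Complex Filter

theorem taylorWithinEval_two_univ {E : Type*} [NormedAddCommGroup E] [NormedSpace ℝ E]
    (f : ℝ → E) (x₀ x : ℝ) :
    taylorWithinEval f 2 Set.univ x₀ x =
      f x₀ + (x - x₀) • deriv f x₀ + (2⁻¹ * (x - x₀) ^ 2) • deriv (deriv f) x₀ := by
  have h2 : iteratedDeriv 2 f = deriv (deriv f) := by rw [iteratedDeriv_succ, iteratedDeriv_one]
  simp [taylor_within_apply, iteratedDerivWithin_univ, h2, one_add_one_eq_two]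

theorem tendsto_sub_sub_smul_deriv_div_sq {E : Type*} [NormedAddCommGroup E] [NormedSpace ℝ E]
    {f : ℝ → E} (hf : ContDiff ℝ 2 f) (x₀ : ℝ) :
    Tendsto (fun x ↦ ((x - x₀) ^ 2)⁻¹ • (f x - f x₀ - (x - x₀) • deriv f x₀))
      (nhdsWithin x₀ {x₀}ᶜ) (nhds ((2 : ℝ)⁻¹ • deriv (deriv f) x₀)) := by
  have h := (taylor_tendsto convex_univ (Set.mem_univ x₀) hf.contDiffOn).add_const
    ((2 : ℝ)⁻¹ • deriv (deriv f) x₀)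
  rw [nhdsWithin_univ, zero_add] at h
  refine (h.mono_left nhdsWithin_le_nhds).congr' ?_
  filter_upwards [self_mem_nhdsWithin] with x hx
  have hx : x - x₀ ≠ 0 := sub_ne_zero.mpr hx
  have hcoef : ((x - x₀) ^ 2)⁻¹ * (2⁻¹ * (x - x₀) ^ 2) = 2⁻¹ := by field_simp
  simp only [taylorWithinEval_two_univ, smul_sub, smul_add, smul_smul, hcoef]
  abel

theorem tendsto_deriv_div_sub_sub_inv {𝕜 : Type*} [NormedField 𝕜] [NormedAlgebra ℝ 𝕜]
    {τ : ℝ → 𝕜} (hτ : ContDiff ℝ 2 τ) {s : ℝ} (hτ' : deriv τ s ≠ 0) :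
    Tendsto (fun σ ↦ deriv τ σ / (τ σ - τ s) - algebraMap ℝ 𝕜 (σ - s)⁻¹)
      (nhdsWithin s {s}ᶜ) (nhds (deriv (deriv τ) s / (2 * deriv τ s))) := by
  have hslope : Tendsto (slope τ s) (nhdsWithin s {s}ᶜ) (nhds (deriv τ s)) :=
    hasDerivAt_iff_tendsto_slope.mp (hτ.differentiable two_ne_zero s).hasDerivAt
  have hslope' : Tendsto (slope (deriv τ) s) (nhdsWithin s {s}ᶜ) (nhds (deriv (deriv τ) s)) :=
    hasDerivAt_iff_tendsto_slope.mp (hτ.differentiable_deriv_two s).hasDerivAt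
  have hlim := (hslope'.sub (tendsto_sub_sub_smul_deriv_div_sq hτ s)).div hslope hτ'
  have hval : (deriv (deriv τ) s - (2 : ℝ)⁻¹ • deriv (deriv τ) s) / deriv τ s
      = deriv (deriv τ) s / (2 * deriv τ s) := by
    have h2 : (2 : 𝕜) ≠ 0 := by
      simpa only [map_ofNat, map_zero] using (algebraMap ℝ 𝕜).injective.ne (two_ne_zero (α := ℝ))
    rw [Algebra.smul_def, map_inv₀, map_ofNat]
    field_simp
    ring
  rw [hval] at hlim
  refine hlim.congr' ?_
  -- `slope τ s σ → τ'(s) ≠ 0` gives `τ σ ≠ τ s` near `s`, avoiding the junk value `x / 0 = 0`.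
  filter_upwards [self_mem_nhdsWithin, hslope.eventually_ne hτ'] with σ hσ hΔ
  have hh : algebraMap ℝ 𝕜 (σ - s) ≠ 0 := by simpa [sub_eq_zero] using hσ
  rw [slope_def_module, Algebra.smul_def] at hΔ
  have hΔ' : τ σ - τ s ≠ 0 := right_ne_zero_of_mul hΔ
  simp only [Pi.div_apply, slope_def_module, Algebra.smul_def, map_inv₀, map_pow,
    map_sub] at hh ⊢
  field_simp
  ring

theorem M1_diagonal_limit_general (τ : ℝ → ℂ) (s : ℝ)
    (hτ : ContDiff ℝ 2 τ) (hτ' : deriv τ s ≠ 0) :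
    Tendsto (fun σ : ℝ => (deriv τ σ / (τ σ - τ s)).im)
      (nhdsWithin s {s}ᶜ)
      (nhds ((deriv (deriv τ) s / (2 * deriv τ s)).im)) := by
  exact ((continuous_im.tendsto _).comp (tendsto_deriv_div_sub_sub_inv hτ hτ')).congr
    fun σ ↦ by simp

/-- Diagonal limit of the kernel `M⁽¹⁾`: for a C² curve `τ` with `τ'(s) ≠ 0`,
injective near `s`, `Im(τ'(σ)/(τ(σ)-τ(s))) → Im(τ''(s)/(2τ'(s)))` as `σ → s`. -/
theorem M1_diagonal_limit (τ : ℝ → ℂ) (s : ℝ)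
    (hτ : ContDiff ℝ 2 τ) (hτ' : deriv τ s ≠ 0)
    (hinj : ∀ᶠ σ in nhdsWithin s {s}ᶜ, τ σ ≠ τ s) :
    Tendsto (fun σ : ℝ => (deriv τ σ / (τ σ - τ s)).im)
      (nhdsWithin s {s}ᶜ)
      (nhds ((deriv (deriv τ) s / (2 * deriv τ s)).im)) :=
  M1_diagonal_limit_general τ s hτ hτ'
end

section
/- For a C² curve τ: ℝ → ℂ with τ'(s) ≠ 0, the limit as σ → s of Im(τ'(σ)·(conj(τ(σ)) − conj(τ(s)))) / (conj(τ(σ)) − conj(τ(s)))² equals Im(τ''(s)·conj(τ'(s))) / (2·conj(τ'(s))²). -/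
open Complex ComplexConjugate Filter
open scoped Topology

/-!
Write the kernel as `(g σ / (σ - s)²) / q σ²`, where `g σ = Im (τ' σ · (conj τ σ - conj τ s))` and
`q σ = (conj τ σ - conj τ s) / (σ - s) → conj τ' s ≠ 0`. Since `τ' · conj τ'` is real,
`g' = Im (τ'' · (conj τ - conj τ s))`, so `g s = 0` and `g' σ / (σ - s) → Im (τ'' s · conj τ' s)`;
L'Hôpital for `g / (σ - s)²` then gives half of that limit.
-/

theorem tendsto_div_ofReal_sub_of_hasDerivAt {f : ℝ → ℂ} {f' : ℂ} {s : ℝ}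
    (hf : HasDerivAt f f' s) (hfs : f s = 0) :
    Tendsto (fun σ => f σ / ((σ - s : ℝ) : ℂ)) (𝓝[≠] s) (𝓝 f') :=
  (hasDerivAt_iff_tendsto_slope.mp hf).congr fun σ => by
    simp [slope, hfs, Complex.real_smul, div_eq_inv_mul]

theorem HasDerivAt.conj_sub_const {f : ℝ → ℂ} {f' : ℂ} {x : ℝ} (hf : HasDerivAt f f' x) (c : ℂ) :
    HasDerivAt (fun σ => conj (f σ) - c) (conj f') x :=
  hf.star.sub_const c

theorem tendsto_div_sub_sq_of_hasDerivAt {g g' : ℝ → ℝ} {s L : ℝ}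
    (hg : ∀ᶠ σ in 𝓝 s, HasDerivAt g (g' σ) σ) (hgs : g s = 0)
    (hlim : Tendsto (fun σ => g' σ / (σ - s)) (𝓝[≠] s) (𝓝 L)) :
    Tendsto (fun σ => g σ / (σ - s) ^ 2) (𝓝[≠] s) (𝓝 (L / 2)) := by
  have hsq (σ : ℝ) : HasDerivAt (fun σ : ℝ => (σ - s) ^ 2) (2 * (σ - s)) σ := by
    simpa using ((hasDerivAt_id σ).sub_const s).fun_pow 2
  refine HasDerivAt.lhopital_zero_nhdsNE (hg.filter_mono nhdsWithin_le_nhds)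
    (.of_forall hsq) ?_ ?_ ?_ ?_
  · filter_upwards [self_mem_nhdsWithin] with σ (hσ : σ ≠ s)
    exact mul_ne_zero two_ne_zero (sub_ne_zero.mpr hσ)
  · simpa [hgs] using hg.self_of_nhds.continuousAt.tendsto.mono_left nhdsWithin_le_nhds
  · have hcont : Continuous fun σ : ℝ => (σ - s) ^ 2 := by fun_prop
    simpa using (hcont.tendsto s).mono_left (nhdsWithin_le_nhds (s := {s}ᶜ))
  · refine (hlim.div_const 2).congr fun σ => ?_
    rw [div_div, mul_comm]

section Kernel

variable {τ τ' τ'' : ℝ → ℂ} {s : ℝ}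

theorem tendsto_im_mul_conj_sub_div_sq
    (hτ : ∀ᶠ σ in 𝓝 s, HasDerivAt τ (τ' σ) σ) (hτ' : ∀ᶠ σ in 𝓝 s, HasDerivAt τ' (τ'' σ) σ)
    (hτ'' : ContinuousAt τ'' s) :
    Tendsto (fun σ => (τ' σ * (conj (τ σ) - conj (τ s))).im / (σ - s) ^ 2) (𝓝[≠] s)
      (𝓝 ((τ'' s * conj (τ' s)).im / 2)) := by
  have hchord := hτ.mono fun σ h => h.conj_sub_const (conj (τ s))
  refine tendsto_div_sub_sq_of_hasDerivAt (g' := fun σ => (τ'' σ * (conj (τ σ) - conj (τ s))).im)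
    ?_ (by simp) ?_
  · filter_upwards [hchord, hτ'] with σ hF h2
    simpa [Complex.mul_conj, Function.comp_def] using
      Complex.imCLM.hasFDerivAt.comp_hasDerivAt σ (h2.mul hF)
  · have hslope := tendsto_div_ofReal_sub_of_hasDerivAt hchord.self_of_nhds (by simp)
    refine ((Complex.continuous_im.tendsto _).comp
      ((hτ''.tendsto.mono_left nhdsWithin_le_nhds).mul hslope)).congr fun σ => ?_
    simp only [Function.comp_apply, ← mul_div_assoc, Complex.div_ofReal_im]

theorem tendsto_im_mul_conj_sub_div_conj_sub_sq
    (hτ : ∀ᶠ σ in 𝓝 s, HasDerivAt τ (τ' σ) σ) (hτ' : ∀ᶠ σ in 𝓝 s, HasDerivAt τ' (τ'' σ) σ)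
    (hτ'' : ContinuousAt τ'' s) (hτs : τ' s ≠ 0) :
    Tendsto (fun σ => ((τ' σ * (conj (τ σ) - conj (τ s))).im : ℂ) / (conj (τ σ) - conj (τ s)) ^ 2)
      (𝓝[≠] s) (𝓝 (((τ'' s * conj (τ' s)).im : ℂ) / (2 * conj (τ' s) ^ 2))) := by
  have hnum := (Complex.continuous_ofReal.tendsto _).comp
    (tendsto_im_mul_conj_sub_div_sq hτ hτ' hτ'')
  have hquot := tendsto_div_ofReal_sub_of_hasDerivAt
    (hτ.self_of_nhds.conj_sub_const (conj (τ s))) (by simp)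
  have hlim := hnum.div (hquot.pow 2) (pow_ne_zero 2 ((map_ne_zero conj).mpr hτs))
  rw [show (((τ'' s * conj (τ' s)).im / 2 : ℝ) : ℂ) / conj (τ' s) ^ 2
      = ((τ'' s * conj (τ' s)).im : ℂ) / (2 * conj (τ' s) ^ 2) by push_cast; ring] at hlim
  refine hlim.congr' ?_
  filter_upwards [self_mem_nhdsWithin] with σ (hσ : σ ≠ s)
  have hne : ((σ - s : ℝ) : ℂ) ≠ 0 := ofReal_ne_zero.mpr (sub_ne_zero.mpr hσ)
  -- This also holds where `conj τ σ = conj τ s`: both sides are then `0` by `x / 0 = 0`.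
  simp only [Pi.div_apply, Function.comp_apply, ofReal_div, ofReal_pow, div_pow]
  exact div_div_div_cancel_right₀ (pow_ne_zero 2 hne) _ _

end Kernel

theorem M2_diagonal_limit_general (τ : ℝ → ℂ) (s : ℝ)
    (hτ : ContDiff ℝ 2 τ) (hτ' : deriv τ s ≠ 0) :
    Tendsto
      (fun σ : ℝ =>
        (((deriv τ σ * ((starRingEnd ℂ) (τ σ) - (starRingEnd ℂ) (τ s))).im : ℂ) /
          ((starRingEnd ℂ) (τ σ) - (starRingEnd ℂ) (τ s)) ^ 2))
      (nhdsWithin s {s}ᶜ)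
      (nhds
        (((deriv (deriv τ) s * (starRingEnd ℂ) (deriv τ s)).im : ℂ) /
          (2 * ((starRingEnd ℂ) (deriv τ s)) ^ 2))) :=
  tendsto_im_mul_conj_sub_div_conj_sub_sq
    (.of_forall fun σ => (hτ.differentiable two_ne_zero σ).hasDerivAt)
    (.of_forall fun σ => (hτ.differentiable_deriv_two σ).hasDerivAt)
    ((hτ.deriv' (n := 1)).continuous_deriv_one.continuousAt) hτ'

/-- Diagonal limit of the kernel `M⁽²⁾`: for a C² curve `τ` with `τ'(s) ≠ 0`,
injective near `s`,
`Im(τ'(σ)(conj τ(σ) − conj τ(s)))/(conj τ(σ) − conj τ(s))² →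
  Im(τ''(s) conj τ'(s))/(2 (conj τ'(s))²)` as `σ → s`. -/
theorem M2_diagonal_limit (τ : ℝ → ℂ) (s : ℝ)
    (hτ : ContDiff ℝ 2 τ) (hτ' : deriv τ s ≠ 0)
    (hinj : ∀ᶠ σ in nhdsWithin s {s}ᶜ, τ σ ≠ τ s) :
    Tendsto
      (fun σ : ℝ =>
        (((deriv τ σ * ((starRingEnd ℂ) (τ σ) - (starRingEnd ℂ) (τ s))).im : ℂ) /
          ((starRingEnd ℂ) (τ σ) - (starRingEnd ℂ) (τ s)) ^ 2))
      (nhdsWithin s {s}ᶜ)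
      (nhds
        (((deriv (deriv τ) s * (starRingEnd ℂ) (deriv τ s)).im : ℂ) /
          (2 * ((starRingEnd ℂ) (deriv τ s)) ^ 2))) :=
  M2_diagonal_limit_general τ s hτ hτ'
end
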